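/- For the e(2)-type Poisson structure {x₁,x₂}=0, {x₁,x₃}=−x₂, {x₂,x₃}=x₁ on ℝ³ restricted to polynomial functions, the vector field E = x₁∂₁ + x₂∂₂ is Poisson but not Hamiltonian: the derivation f ↦ E(f) satisfies E({f,g}) = {E(f), g} + {f, E(g)} for all polynomials f,g, yet there is no polynomial h with X_h = E (i.e., no h with {h, x₁} = x₁, {h, x₂} = x₂, {h, x₃} = 0). -/

import Mathlib

/-! The commutators `[∂₁, E] = ∂₁`, `[∂₂, E] = ∂₂`, `[∂₃, E] = 0`, together with `E x₁ = x₁` and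
`E x₂ = x₂` for the coefficients of the bracket, make `E{f,g} − {Ef,g} − {f,Eg}` cancel term by
term. A Hamiltonian field has `X_h(x₁) = {h, x₁} = x₂ ∂₃h`, which vanishes on `x₂ = 0`, while
`E x₁ = x₁` does not. -/

open MvPolynomial

/-- The e(2) linear Poisson bracket `{x₁,x₂}=0`, `{x₁,x₃}=−x₂`, `{x₂,x₃}=x₁` on the
polynomial algebra `ℝ[x₁,x₂,x₃]`, extended by bilinearity and Leibniz:
`{f,g} = Σᵢⱼ πⁱʲ ∂ᵢf ∂ⱼg`. -/
noncomputable def e2pbr (f g : MvPolynomial (Fin 3) ℝ) : MvPolynomial (Fin 3) ℝ :=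
  (-(X 1)) * (pderiv 0 f * pderiv 2 g - pderiv 2 f * pderiv 0 g)
    + (X 0) * (pderiv 1 f * pderiv 2 g - pderiv 2 f * pderiv 1 g)

/-- The Euler-type vector field `E = x₁∂₁ + x₂∂₂` acting as a derivation. -/
noncomputable def eulerE (f : MvPolynomial (Fin 3) ℝ) : MvPolynomial (Fin 3) ℝ :=
  X 0 * pderiv 0 f + X 1 * pderiv 1 f

section PDeriv

variable {σ R : Type*} [CommSemiring R]

theorem MvPolynomial.pderiv_pderiv_X (i j k : σ) :
    pderiv i (pderiv j (X k : MvPolynomial σ R)) = 0 := by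
  classical
  rw [pderiv_X, Pi.single_apply]
  split_ifs <;> simp

theorem MvPolynomial.pderiv_comm (i j : σ) (f : MvPolynomial σ R) :
    pderiv i (pderiv j f) = pderiv j (pderiv i f) := by
  induction f using MvPolynomial.induction_on with
  | C a => simp
  | add p q hp hq => simp only [map_add, hp, hq]
  | mul_X p k hp =>
    simp only [pderiv_mul, map_add, hp, pderiv_pderiv_X, mul_zero, add_zero]
    ring

theorem MvPolynomial.X_mul_ne_X [Nontrivial R] {i j : σ} (hij : i ≠ j)
    (p : MvPolynomial σ R) : X i * p ≠ X j := by
  classical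
  intro h
  have := congrArg (eval (Pi.single j 1)) h
  simp [hij] at this

end PDeriv

noncomputable def eulerDerivation :
    Derivation ℝ (MvPolynomial (Fin 3) ℝ) (MvPolynomial (Fin 3) ℝ) :=
  (X 0 : MvPolynomial (Fin 3) ℝ) • pderiv 0 + (X 1 : MvPolynomial (Fin 3) ℝ) • pderiv 1

theorem eulerE_eq_eulerDerivation : eulerE = ⇑eulerDerivation := by
  funext f
  simp [eulerE, eulerDerivation]

theorem eulerE_X_zero : eulerE (X 0) = X 0 := by
  simp [eulerE]

theorem eulerE_X_one : eulerE (X 1) = X 1 := by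
  simp [eulerE]

theorem pderiv_zero_eulerE (f : MvPolynomial (Fin 3) ℝ) :
    pderiv 0 (eulerE f) = pderiv 0 f + eulerE (pderiv 0 f) := by
  simp only [eulerE, map_add, pderiv_mul, pderiv_X_self,
    pderiv_X_of_ne (by decide : (1 : Fin 3) ≠ 0)]
  rw [pderiv_comm 1 0]
  ring

theorem pderiv_one_eulerE (f : MvPolynomial (Fin 3) ℝ) :
    pderiv 1 (eulerE f) = pderiv 1 f + eulerE (pderiv 1 f) := by
  simp only [eulerE, map_add, pderiv_mul, pderiv_X_self,
    pderiv_X_of_ne (by decide : (0 : Fin 3) ≠ 1)]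
  rw [pderiv_comm 1 0]
  ring

theorem pderiv_two_eulerE (f : MvPolynomial (Fin 3) ℝ) :
    pderiv 2 (eulerE f) = eulerE (pderiv 2 f) := by
  simp only [eulerE, map_add, pderiv_mul, pderiv_X_of_ne (by decide : (0 : Fin 3) ≠ 2),
    pderiv_X_of_ne (by decide : (1 : Fin 3) ≠ 2)]
  rw [pderiv_comm 2 0, pderiv_comm 2 1]
  ring

theorem eulerE_e2pbr (f g : MvPolynomial (Fin 3) ℝ) :
    eulerE (e2pbr f g) = e2pbr (eulerE f) g + e2pbr f (eulerE g) := by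
  simp only [e2pbr, pderiv_zero_eulerE, pderiv_one_eulerE, pderiv_two_eulerE]
  simp only [eulerE_eq_eulerDerivation, map_add, map_sub, map_neg, Derivation.leibniz, smul_eq_mul]
  simp only [← eulerE_eq_eulerDerivation, eulerE_X_zero, eulerE_X_one]
  ring

theorem e2pbr_X_zero (h : MvPolynomial (Fin 3) ℝ) : e2pbr h (X 0) = X 1 * pderiv 2 h := by
  simp [e2pbr]

/-- For the e(2)-type Poisson structure on polynomials, the vector field
`E = x₁∂₁ + x₂∂₂` is Poisson (a derivation of the bracket) but not Hamiltonian: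
no polynomial `h` satisfies `{h,x₁} = x₁`, `{h,x₂} = x₂`, `{h,x₃} = 0`. -/
theorem e2_euler_poisson_not_hamiltonian :
    (∀ f g : MvPolynomial (Fin 3) ℝ,
      eulerE (e2pbr f g) = e2pbr (eulerE f) g + e2pbr f (eulerE g)) ∧
    ¬ ∃ h : MvPolynomial (Fin 3) ℝ,
        e2pbr h (X 0) = X 0 ∧ e2pbr h (X 1) = X 1 ∧ e2pbr h (X 2) = 0 := by
  refine ⟨eulerE_e2pbr, ?_⟩
  rintro ⟨h, hX₀, -, -⟩
  rw [e2pbr_X_zero] at hX₀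
  exact X_mul_ne_X (by decide) _ hX₀
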